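/- Let m ≥ 2 be an integer, define h_m : ℕ → ℕ by h_m(a) = |2a − (m+1)|, and let t ≥ 1. Then there exists an integer a with 1 ≤ a ≤ m such that h_m^[t](a) = a and h_m^[s](a) ≠ a for all s with 1 ≤ s < t (i.e., a has minimal period exactly t) if and only if there exists a divisor d of m+1 with d > 1 such that t is the smallest positive integer satisfying d ∣ 2^t + 1 or d ∣ 2^t − 1 (that is, d ∣ 2^t + 1 or d ∣ 2^t − 1, and for all s with 1 ≤ s < t, d ∤ 2^s + 1 and d ∤ 2^s − 1). -/

import Mathlib

/-!
Modulo `M = m + 1` the map is `a ↦ ±2a`, so `h^[s] a ≡ ±2^s a`; since orbits of `[0, M]` stay in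
`[0, M]`, the iterate `h^[s] a` lies in `{a, M - a}` exactly when `M ∣ a (2^s ± 1)`, i.e. when
`d = M / gcd(M, a)` divides `2^s ± 1`. As `h (M - a) = h a`, an early visit to `M - a` before the
period `t` would force an earlier return to `a`; so `a` has minimal period `t` iff `t` is least
with `d ∣ 2^t ± 1`. Conversely, for `d ∣ M` with `d > 1`, one of `M / d` and `M - M / d` has
minimal period `t`.
-/

def kaprekarMap (M a : ℕ) : ℕ := (2 * (a : ℤ) - M).natAbs

lemma Int.eq_neg_or_eq_zero_or_eq_of_dvd {M y : ℤ} (hy : M ∣ y) (hlo : -M ≤ y) (hhi : y ≤ M) :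
    y = -M ∨ y = 0 ∨ y = M := by
  obtain ⟨k, rfl⟩ := hy
  rcases (neg_le_self_iff.mp (hlo.trans hhi)).eq_or_lt with rfl | hM
  · simp
  have hk1 : k ≤ 1 := by nlinarith
  have hk2 : -1 ≤ k := by nlinarith
  interval_cases k <;> simp

lemma Nat.eq_or_eq_sub_iff_natCast_eq_or_eq_neg {M x a : ℕ} (hx : x ≤ M) (ha : a ≤ M) :
    x = a ∨ x = M - a ↔ (x : ZMod M) = a ∨ (x : ZMod M) = -a := by
  have hsub : (x : ZMod M) = a ↔ (M : ℤ) ∣ x - a := by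
    rw [← ZMod.intCast_zmod_eq_zero_iff_dvd, ← sub_eq_zero]
    push_cast
    rfl
  have hadd : (x : ZMod M) = -a ↔ (M : ℤ) ∣ x + a - M := by
    rw [← ZMod.intCast_zmod_eq_zero_iff_dvd, ← add_eq_zero_iff_eq_neg]
    push_cast
    rw [ZMod.natCast_self, sub_zero]
  rw [hsub, hadd]
  constructor
  · rintro (rfl | rfl)
    · simp
    · push_cast [ha]
      simp
  · rintro (hd | hd) <;>
      rcases Int.eq_neg_or_eq_zero_or_eq_of_dvd hd (by omega) (by omega) with h | h | h <;> omega

lemma Nat.dvd_mul_iff_div_gcd_dvd {M a k : ℕ} (hM : 0 < M) : M ∣ a * k ↔ M / M.gcd a ∣ k := by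
  have hg : 0 < M.gcd a := Nat.gcd_pos_of_pos_left a hM
  calc M ∣ a * k ↔ M ∣ M.gcd a * k := Nat.dvd_gcd_mul_iff_dvd_mul.symm
    _ ↔ M.gcd a * (M / M.gcd a) ∣ M.gcd a * k := by rw [Nat.mul_div_cancel' (Nat.gcd_dvd_left M a)]
    _ ↔ M / M.gcd a ∣ k := Nat.mul_dvd_mul_iff_left hg

lemma Nat.div_gcd_div_self {M d : ℕ} (hd : d ∣ M) (hM : M ≠ 0) : M / M.gcd (M / d) = d := by
  rw [Nat.gcd_eq_right (Nat.div_dvd_of_dvd hd), Nat.div_div_self hd hM]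

lemma ZMod.two_pow_mul_eq_or_eq_neg_iff (M s a : ℕ) :
    ((2 : ZMod M) ^ s * a = -a ∨ (2 : ZMod M) ^ s * a = a) ↔
      M ∣ a * (2 ^ s + 1) ∨ M ∣ a * (2 ^ s - 1) := by
  rw [← ZMod.natCast_eq_zero_iff, ← ZMod.natCast_eq_zero_iff]
  push_cast [Nat.one_le_two_pow]
  exact or_congr ⟨fun e => by linear_combination e, fun e => by linear_combination e⟩
    ⟨fun e => by linear_combination e, fun e => by linear_combination e⟩

namespace kaprekarMap

variable {M : ℕ}

lemma apply_le {a : ℕ} (ha : a ≤ M) : kaprekarMap M a ≤ M := by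
  unfold kaprekarMap
  omega

lemma iterate_le (s : ℕ) {a : ℕ} (ha : a ≤ M) : (kaprekarMap M)^[s] a ≤ M := by
  induction s with
  | zero => exact ha
  | succ s ih =>
    rw [Function.iterate_succ_apply']
    exact apply_le ih

lemma apply_sub {a : ℕ} (ha : a ≤ M) : kaprekarMap M (M - a) = kaprekarMap M a := by
  unfold kaprekarMap
  omega

lemma iterate_sub {s a : ℕ} (hs : s ≠ 0) (ha : a ≤ M) :
    (kaprekarMap M)^[s] (M - a) = (kaprekarMap M)^[s] a := by
  obtain ⟨s, rfl⟩ := Nat.exists_eq_succ_of_ne_zero hs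
  rw [Function.iterate_succ_apply, Function.iterate_succ_apply, apply_sub ha]

lemma natCast_eq_or_eq_neg (a : ℕ) :
    (kaprekarMap M a : ZMod M) = 2 * a ∨ (kaprekarMap M a : ZMod M) = -(2 * a) := by
  have hcast : (kaprekarMap M a : ZMod M) = ((|2 * (a : ℤ) - M| : ℤ) : ZMod M) := by
    rw [kaprekarMap, ← Int.natCast_natAbs, Int.cast_natCast]
  rcases abs_choice (2 * (a : ℤ) - M) with h | h <;> rw [hcast, h] <;> push_cast <;> simp

lemma natCast_iterate_eq_or_eq_neg (s a : ℕ) :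
    ((kaprekarMap M)^[s] a : ZMod M) = 2 ^ s * a ∨
      ((kaprekarMap M)^[s] a : ZMod M) = -(2 ^ s * a) := by
  induction s with
  | zero => simp
  | succ s ih =>
    rw [Function.iterate_succ_apply', pow_succ]
    rcases natCast_eq_or_eq_neg ((kaprekarMap M)^[s] a) with h | h <;>
      rcases ih with ih | ih <;> rw [h, ih]
    · left; ring
    · right; ring
    · right; ring
    · left; ring

lemma iterate_eq_or_eq_sub_iff {s a : ℕ} (hM : 0 < M) (ha : a ≤ M) :
    (kaprekarMap M)^[s] a = a ∨ (kaprekarMap M)^[s] a = M - a ↔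
      M / M.gcd a ∣ 2 ^ s + 1 ∨ M / M.gcd a ∣ 2 ^ s - 1 := by
  rw [Nat.eq_or_eq_sub_iff_natCast_eq_or_eq_neg (iterate_le s ha) ha,
    ← Nat.dvd_mul_iff_div_gcd_dvd hM, ← Nat.dvd_mul_iff_div_gcd_dvd hM,
    ← ZMod.two_pow_mul_eq_or_eq_neg_iff, or_comm]
  rcases natCast_iterate_eq_or_eq_neg s a (M := M) with h | h <;> rw [h]
  rw [neg_inj, neg_eq_iff_eq_neg, or_comm]

lemma iterate_ne_of_minimal {t s b : ℕ} (hb : b ≤ M) (hper : (kaprekarMap M)^[t] b = b)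
    (hmin : ∀ s, 1 ≤ s → s < t → (kaprekarMap M)^[s] b ≠ b) (hs : 1 ≤ s) (hst : s < t) :
    ¬((kaprekarMap M)^[s] b = b ∨ (kaprekarMap M)^[s] b = M - b) := by
  rintro (hfix | hflip)
  · exact hmin s hs hst hfix
  · refine hmin (t - s) (by omega) (by omega) ?_
    calc (kaprekarMap M)^[t - s] b = (kaprekarMap M)^[t - s] (M - b) :=
          (iterate_sub (by omega) hb).symm
      _ = (kaprekarMap M)^[t] b := by
          rw [← hflip, ← Function.iterate_add_apply, Nat.sub_add_cancel hst.le]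
      _ = b := hper

lemma exists_minimal_of_eq_or_eq_sub {t a : ℕ} (ha : a ≤ M)
    (hpair : (kaprekarMap M)^[t] a = a ∨ (kaprekarMap M)^[t] a = M - a)
    (hnot : ∀ s, 1 ≤ s → s < t → ¬((kaprekarMap M)^[s] a = a ∨ (kaprekarMap M)^[s] a = M - a)) :
    ∃ b, (b = a ∨ b = M - a) ∧ (kaprekarMap M)^[t] b = b ∧
      ∀ s, 1 ≤ s → s < t → (kaprekarMap M)^[s] b ≠ b := by
  rcases hpair with hfix | hflip
  · exact ⟨a, Or.inl rfl, hfix, fun s hs hst h => hnot s hs hst (Or.inl h)⟩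
  refine ⟨M - a, Or.inr rfl, ?_, fun s hs hst h => hnot s hs hst (Or.inr ?_)⟩
  · rcases t.eq_zero_or_pos with rfl | ht
    · rfl
    · rw [iterate_sub ht.ne' ha, hflip]
  · rwa [iterate_sub (by omega) ha] at h

end kaprekarMap

theorem twoDigitKaprekar_minimal_period_general (m t : ℕ)
    (h : ℕ → ℕ) (hh : ∀ a : ℕ, h a = (2 * (a : ℤ) - (m + 1)).natAbs) :
    (∃ a : ℕ, 1 ≤ a ∧ a ≤ m ∧ h^[t] a = a ∧ ∀ s : ℕ, 1 ≤ s → s < t → h^[s] a ≠ a) ↔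
      (∃ d : ℕ, d ∣ m + 1 ∧ 1 < d ∧ (d ∣ 2 ^ t + 1 ∨ d ∣ 2 ^ t - 1) ∧
        ∀ s : ℕ, 1 ≤ s → s < t → ¬d ∣ 2 ^ s + 1 ∧ ¬d ∣ 2 ^ s - 1) := by
  obtain rfl : h = kaprekarMap (m + 1) := funext fun a => by rw [hh, kaprekarMap]; push_cast; rfl
  have hM : 0 < m + 1 := m.succ_pos
  constructor
  · rintro ⟨a, ha1, ham, hper, hmin⟩
    have hg : (m + 1).gcd a ∣ m + 1 := Nat.gcd_dvd_left _ _
    have hga : (m + 1).gcd a ≤ a := Nat.le_of_dvd ha1 (Nat.gcd_dvd_right _ _)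
    refine ⟨(m + 1) / (m + 1).gcd a, Nat.div_dvd_of_dvd hg,
      (Nat.lt_div_iff_mul_lt_of_dvd (Nat.gcd_pos_of_pos_left a hM).ne' hg).2 (by omega),
      (kaprekarMap.iterate_eq_or_eq_sub_iff hM (by omega)).1 (Or.inl hper), fun s hs hst => ?_⟩
    rw [← not_or, ← kaprekarMap.iterate_eq_or_eq_sub_iff hM (by omega)]
    exact kaprekarMap.iterate_ne_of_minimal (by omega) hper hmin hs hst
  · rintro ⟨d, hdM, hd1, hdt, hdmin⟩
    have haM : (m + 1) / d < m + 1 := Nat.div_lt_self hM hd1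
    have hpair := fun s => kaprekarMap.iterate_eq_or_eq_sub_iff (s := s) hM haM.le
    simp only [Nat.div_gcd_div_self hdM hM.ne'] at hpair
    obtain ⟨b, hb, hper, hmin⟩ := kaprekarMap.exists_minimal_of_eq_or_eq_sub haM.le
      ((hpair t).2 hdt) fun s hs hst => by rw [hpair, not_or]; exact hdmin s hs hst
    have ha1 : 1 ≤ (m + 1) / d := Nat.div_pos (Nat.le_of_dvd hM hdM) (by omega)
    exact ⟨b, by omega, by omega, hper, hmin⟩

/-- For `m ≥ 2` and `t ≥ 1`, with `h_m(a) = |2a - (m+1)|`: there exists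
`1 ≤ a ≤ m` of minimal period exactly `t` under `h_m` iff there is a divisor
`d > 1` of `m+1` such that `t` is the smallest positive integer with
`d ∣ 2^t + 1` or `d ∣ 2^t - 1`. -/
theorem twoDigitKaprekar_minimal_period (m t : ℕ) (hm : 2 ≤ m) (ht : 1 ≤ t)
    (h : ℕ → ℕ) (hh : ∀ a : ℕ, h a = (2 * (a : ℤ) - (m + 1)).natAbs) :
    (∃ a : ℕ, 1 ≤ a ∧ a ≤ m ∧ h^[t] a = a ∧ ∀ s : ℕ, 1 ≤ s → s < t → h^[s] a ≠ a) ↔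
      (∃ d : ℕ, d ∣ m + 1 ∧ 1 < d ∧ (d ∣ 2 ^ t + 1 ∨ d ∣ 2 ^ t - 1) ∧
        ∀ s : ℕ, 1 ≤ s → s < t → ¬d ∣ 2 ^ s + 1 ∧ ¬d ∣ 2 ^ s - 1) :=
  twoDigitKaprekar_minimal_period_general m t h hh
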